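/- arXiv:2401.02666 — 7 statements merged into one kernel-verified Lean document; each statement's English description precedes it below -/
import Mathlib

section
/- For every instance of the strongly stable matching problem with closures, there exist a subset R ⊆ E and a matching μ in G such that (R1) no stable matching in G contains an edge of R; (R2) μ ⊆ Ch(E \ R); (R3) μ(d) ≠ ∅ for every doctor d ∈ D[E \ R]; (R4) R ∩ block(Ch(E \ R)) = ∅; and (R5) for every doctor d and every pair of edges e ∈ R(d) and f ∈ E(d) \ R, e ≿_d f. -/
open Classical

variable {D H : Type}

def edgesD (E : Set (D × H)) (d : D) : Set (D × H) := {e ∈ E | e.1 = d}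

def edgesH (E : Set (D × H)) (h : H) : Set (D × H) := {e ∈ E | e.2 = h}

def optD (E : Set (D × H)) (d : D) : Set (Option (D × H)) :=
  insert none (some '' edgesD E d)

def optH (E : Set (D × H)) (h : H) : Set (Option (D × H)) :=
  insert none (some '' edgesH E h)

/-- An instance of the strongly stable matching problem with closures:
a bipartite graph between doctors `D` and hospitals `H` with edge set `E`,
a set `S` of closable hospitals, and for each vertex a transitive, total
preference relation on its incident edges together with `∅` (modelled by
`Option`, where `none` plays the role of `∅`), such that every incident
edge is strictly preferred to `∅`. -/
structure SSMC (D H : Type) where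
  E : Set (D × H)
  S : Set H
  prefD : D → Option (D × H) → Option (D × H) → Prop
  prefH : H → Option (D × H) → Option (D × H) → Prop
  prefD_trans : ∀ d, ∀ e ∈ optD E d, ∀ f ∈ optD E d, ∀ g ∈ optD E d,
    prefD d e f → prefD d f g → prefD d e g
  prefD_total : ∀ d, ∀ e ∈ optD E d, ∀ f ∈ optD E d, prefD d e f ∨ prefD d f e
  prefD_none : ∀ d, ∀ e ∈ edgesD E d, prefD d (some e) none ∧ ¬ prefD d none (some e)
  prefH_trans : ∀ h, ∀ e ∈ optH E h, ∀ f ∈ optH E h, ∀ g ∈ optH E h,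
    prefH h e f → prefH h f g → prefH h e g
  prefH_total : ∀ h, ∀ e ∈ optH E h, ∀ f ∈ optH E h, prefH h e f ∨ prefH h f e
  prefH_none : ∀ h, ∀ e ∈ edgesH E h, prefH h (some e) none ∧ ¬ prefH h none (some e)

namespace SSMC

variable (I : SSMC D H)

/-- `e ≻_d f` -/
def strictD (d : D) (e f : Option (D × H)) : Prop := I.prefD d e f ∧ ¬ I.prefD d f e

/-- `e ∼_d f` -/
def simD (d : D) (e f : Option (D × H)) : Prop := I.prefD d e f ∧ I.prefD d f e

/-- `e ≻_h f` -/
def strictH (h : H) (e f : Option (D × H)) : Prop := I.prefH h e f ∧ ¬ I.prefH h f e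

/-- `e ∼_h f` -/
def simH (h : H) (e f : Option (D × H)) : Prop := I.prefH h e f ∧ I.prefH h f e

/-- A matching: a subset of `E` with at most one edge at each vertex. -/
def isMatching (μ : Set (D × H)) : Prop :=
  μ ⊆ I.E ∧ (∀ e ∈ μ, ∀ f ∈ μ, e.1 = f.1 → e = f) ∧
    (∀ e ∈ μ, ∀ f ∈ μ, e.2 = f.2 → e = f)

end SSMC

/-- `μ(d)`: the edge of `μ` at doctor `d` (or `none`). -/
noncomputable def muD (μ : Set (D × H)) (d : D) : Option (D × H) :=
  if h : ∃ e, e ∈ μ ∧ e.1 = d then some h.choose else none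

/-- `μ(h)`: the edge of `μ` at hospital `h` (or `none`). -/
noncomputable def muH (μ : Set (D × H)) (h : H) : Option (D × H) :=
  if hh : ∃ e, e ∈ μ ∧ e.2 = h then some hh.choose else none

namespace SSMC

variable (I : SSMC D H)

/-- `e` blocks the matching `μ`: `e ∈ E \ μ`, `e` weakly blocks `μ` on both of its
endpoints and strongly blocks `μ` on at least one of them (where blocking on a
hospital `h ∈ S` additionally requires `μ(h) ≠ ∅`). -/
def blocks (μ : Set (D × H)) (e : D × H) : Prop :=
  e ∈ I.E ∧ e ∉ μ ∧
  I.prefD e.1 (some e) (muD μ e.1) ∧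
  (I.prefH e.2 (some e) (muH μ e.2) ∧ (e.2 ∈ I.S → muH μ e.2 ≠ none)) ∧
  (I.strictD e.1 (some e) (muD μ e.1) ∨
    (I.strictH e.2 (some e) (muH μ e.2) ∧ (e.2 ∈ I.S → muH μ e.2 ≠ none)))

/-- A stable matching: no edge blocks it. -/
def stable (μ : Set (D × H)) : Prop :=
  I.isMatching μ ∧ ∀ e, ¬ I.blocks μ e

/-- `Ch_D(F)`: union over doctors `d` of the most preferred edges of `F(d)`. -/
def ChD (F : Set (D × H)) : Set (D × H) :=
  {e ∈ F | ∀ f ∈ F, f.1 = e.1 → I.prefD e.1 (some e) (some f)}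

/-- `Ch_H(F)`: union over hospitals `h` of the most preferred edges of `F(h)`. -/
def ChH (F : Set (D × H)) : Set (D × H) :=
  {e ∈ F | ∀ f ∈ F, f.2 = e.2 → I.prefH e.2 (some e) (some f)}

/-- `Ch(F) = Ch_H(Ch_D(F))`. -/
def Ch (F : Set (D × H)) : Set (D × H) := I.ChH (I.ChD F)

/-- `e ≻_d F` for a flat set `F`. -/
def dSucc (F : Set (D × H)) (e : D × H) : Prop :=
  (∀ f ∈ F, f.1 ≠ e.1) ∨ ∃ f ∈ F, f.1 = e.1 ∧ I.strictD e.1 (some e) (some f)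

/-- `e ∼_d F` for a flat set `F`. -/
def dSim (F : Set (D × H)) (e : D × H) : Prop :=
  ∃ f ∈ F, f.1 = e.1 ∧ I.simD e.1 (some e) (some f)

/-- `block(F)` for a flat set `F ⊆ E`. -/
def setBlock (F : Set (D × H)) : Set (D × H) :=
  {e | e ∈ I.E ∧ e ∉ F ∧ (∃ f ∈ F, f.2 = e.2) ∧
    (I.dSucc F e ∨ I.dSim F e) ∧
    (I.dSucc F e → ∃ f ∈ F, f.2 = e.2 ∧ I.prefH e.2 (some e) (some f)) ∧
    (I.dSim F e → ∃ f ∈ F, f.2 = e.2 ∧ I.strictH e.2 (some e) (some f))}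

/-- `L = Ch(E \ R)`. -/
def Lset (R : Set (D × H)) : Set (D × H) := I.Ch (I.E \ R)

/-- The pre-processing conditions (R1)–(R5) on a pair `(R, μ)`. -/
def preproc (R μ : Set (D × H)) : Prop :=
  R ⊆ I.E ∧ I.isMatching μ ∧
  -- (R1)
  (∀ σ, I.stable σ → ∀ e ∈ R, e ∉ σ) ∧
  -- (R2)
  μ ⊆ I.Ch (I.E \ R) ∧
  -- (R3)
  (∀ d : D, (∃ e ∈ I.E \ R, e.1 = d) → ∃ e ∈ μ, e.1 = d) ∧
  -- (R4)
  R ∩ I.setBlock (I.Ch (I.E \ R)) = ∅ ∧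
  -- (R5)
  (∀ d : D, ∀ e ∈ R, e.1 = d → ∀ f ∈ I.E \ R, f.1 = d → I.prefD d (some e) (some f))

/-- `h` is a critical hospital with respect to `(R, μ)`. -/
def critical (R μ : Set (D × H)) (h : H) : Prop :=
  h ∉ I.S ∧ (∀ e ∈ μ, e.2 ≠ h) ∧
  ((∃ e ∈ I.Ch (I.E \ R), e.2 = h) ∨ (∃ e ∈ R, e.2 = h))

/-- Assumption (★): every doctor strictly prefers any acceptable hospital
outside `S` to any acceptable hospital in `S`. -/
def starAssumption : Prop :=
  ∀ (d : D) (h h' : H), (d, h) ∈ I.E → (d, h') ∈ I.E → h ∈ I.S → h' ∉ I.S →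
    I.strictD d (some (d, h')) (some (d, h))

end SSMC

/-!
Edges are removed in batches from the current top-choice set `L = Ch_D(E \ R)`, each batch for a
reason that rules it out of every stable matching: a hospital strictly prefers another edge of `L`;
a removed edge `e`, which its doctor weakly prefers to every remaining edge, would block any
matching through an edge of `L` at the hospital of `e`; or the graph `L` violates Hall's condition
on the doctors of `D[E \ R]`, and then the edges of `L` into the neighbourhood of a minimal
violator go.
Only top edges are removed, which gives (R5). When none of these applies, Hall's theorem matches
every doctor of `D[E \ R]` along `L`, and this matching is `μ`.
-/

theorem Set.Finite.exists_forall_rel_of_total {α : Type*} {r : α → α → Prop} {s : Set α}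
    (hs : s.Finite) (hne : s.Nonempty) (htot : ∀ a ∈ s, ∀ b ∈ s, r a b ∨ r b a)
    (htrans : ∀ a ∈ s, ∀ b ∈ s, ∀ c ∈ s, r a b → r b c → r a c) :
    ∃ a ∈ s, ∀ b ∈ s, r a b := by
  -- an element dominating the largest number of elements dominates them all
  obtain ⟨a, ha, hmax⟩ := Set.exists_max_image s (fun x => {y ∈ s | r x y}.ncard) hs hne
  refine ⟨a, ha, fun b hb => by_contra fun hab => ?_⟩
  have hba : r b a := (htot a ha b hb).resolve_left hab
  have hle : {y ∈ s | r a y} ⊆ {y ∈ s | r b y} :=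
    fun y hy => ⟨hy.1, htrans b hb a ha y hy.1 hba hy.2⟩
  have hsub : {y ∈ s | r a y} ⊂ {y ∈ s | r b y} :=
    (Set.ssubset_iff_of_subset hle).mpr ⟨b, ⟨hb, (htot b hb b hb).elim id id⟩, fun h => hab h.2⟩
  exact (hmax b hb).not_gt (Set.ncard_lt_ncard hsub (hs.subset fun _ hy => hy.1))

theorem Finset.card_biUnion_sdiff_lt_card_sdiff {ι α : Type*} [DecidableEq ι] [DecidableEq α]
    (t : ι → Finset α) {s A : Finset ι} (hA : A ⊆ s) (hs : (s.biUnion t).card < s.card)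
    {y : ι → α} (hy : Set.InjOn y A) (hyt : ∀ i ∈ A, y i ∈ t i)
    (hdisj : ∀ i ∈ s \ A, ∀ j ∈ A, y j ∉ t i) :
    ((s \ A).biUnion t).card < (s \ A).card := by
  have himage : A.image y ⊆ s.biUnion t :=
    Finset.image_subset_iff.mpr fun i hi => Finset.mem_biUnion.mpr ⟨i, hA hi, hyt i hi⟩
  have hrest : (s \ A).biUnion t ⊆ s.biUnion t \ A.image y := by
    intro h hh
    obtain ⟨i, hi, hhi⟩ := Finset.mem_biUnion.mp hh
    refine Finset.mem_sdiff.mpr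
      ⟨Finset.biUnion_subset_biUnion_of_subset_left t Finset.sdiff_subset hh, fun hm => ?_⟩
    obtain ⟨j, hj, rfl⟩ := Finset.mem_image.mp hm
    exact hdisj i hi j hj hhi
  have hcard := Finset.card_le_card hrest
  have hA' := Finset.card_le_card himage
  rw [Finset.card_sdiff_of_subset himage, Finset.card_image_of_injOn hy] at hcard
  rw [Finset.card_image_of_injOn hy] at hA'
  rw [Finset.card_sdiff_of_subset hA]
  omega

lemma some_mem_optD {E : Set (D × H)} {d : D} {e : D × H} (he : e ∈ edgesD E d) :
    some e ∈ optD E d :=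
  Set.mem_insert_of_mem _ (Set.mem_image_of_mem _ he)

lemma some_mem_optH {E : Set (D × H)} {h : H} {e : D × H} (he : e ∈ edgesH E h) :
    some e ∈ optH E h :=
  Set.mem_insert_of_mem _ (Set.mem_image_of_mem _ he)

lemma muD_eq_none_or_exists (σ : Set (D × H)) (d : D) :
    muD σ d = none ∨ ∃ x ∈ σ, x.1 = d ∧ muD σ d = some x := by
  by_cases hex : ∃ e, e ∈ σ ∧ e.1 = d
  · exact Or.inr ⟨hex.choose, hex.choose_spec.1, hex.choose_spec.2, dif_pos hex⟩
  · exact Or.inl (dif_neg hex)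

namespace SSMC

variable (I : SSMC D H)

lemma prefD_trans_of_mem {d : D} {e f g : D × H} (he : e ∈ edgesD I.E d)
    (hf : f ∈ edgesD I.E d) (hg : g ∈ edgesD I.E d) (hef : I.prefD d (some e) (some f))
    (hfg : I.prefD d (some f) (some g)) : I.prefD d (some e) (some g) :=
  I.prefD_trans d _ (some_mem_optD he) _ (some_mem_optD hf) _ (some_mem_optD hg) hef hfg

lemma strictD_of_strictD_of_prefD {d : D} {e f g : D × H} (he : e ∈ edgesD I.E d)
    (hf : f ∈ edgesD I.E d) (hg : g ∈ edgesD I.E d) (hef : I.strictD d (some e) (some f))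
    (hfg : I.prefD d (some f) (some g)) : I.strictD d (some e) (some g) :=
  ⟨I.prefD_trans_of_mem he hf hg hef.1 hfg,
    fun hge => hef.2 (I.prefD_trans_of_mem hf hg he hfg hge)⟩

lemma ChD_subset (F : Set (D × H)) : I.ChD F ⊆ F := fun _ he => he.1

lemma exists_mem_ChD {F : Set (D × H)} (hF : F ⊆ I.E) (hfin : F.Finite) {x : D × H}
    (hx : x ∈ F) : ∃ m ∈ I.ChD F, m.1 = x.1 := by
  have hedge : ∀ y ∈ {y ∈ F | y.1 = x.1}, y ∈ edgesD I.E x.1 := fun y hy => ⟨hF hy.1, hy.2⟩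
  obtain ⟨m, hm, hmax⟩ := (hfin.subset (Set.sep_subset F _)).exists_forall_rel_of_total
    (s := {y ∈ F | y.1 = x.1}) (r := fun a b => I.prefD x.1 (some a) (some b)) ⟨x, hx, rfl⟩
    (fun a ha b hb => I.prefD_total _ _ (some_mem_optD (hedge a ha)) _
      (some_mem_optD (hedge b hb)))
    (fun a ha b hb c hc => I.prefD_trans_of_mem (hedge a ha) (hedge b hb) (hedge c hc))
  refine ⟨m, ⟨hm.1, fun f hf hfm => ?_⟩, hm.2⟩
  rw [hm.2]
  exact hmax f ⟨hf, hfm.trans hm.2⟩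

lemma strictD_of_mem_ChD_of_notMem {F : Set (D × H)} (hF : F ⊆ I.E) {e x : D × H}
    (he : e ∈ I.ChD F) (hx : x ∈ F) (hxe : x.1 = e.1) (hxL : x ∉ I.ChD F) :
    I.strictD e.1 (some e) (some x) := by
  refine ⟨he.2 x hx hxe, fun hxe' => hxL ⟨hx, fun y hy hyx => ?_⟩⟩
  rw [hxe]
  exact I.prefD_trans_of_mem ⟨hF hx, hxe⟩ ⟨hF he.1, rfl⟩ ⟨hF hy, hyx.trans hxe⟩ hxe'
    (he.2 y hy (hyx.trans hxe))

lemma strictD_of_strictD_mem_ChD {F : Set (D × H)} (hF : F ⊆ I.E) {e g x : D × H}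
    (he : e ∈ I.E) (hg : g ∈ I.ChD F) (hge : g.1 = e.1) (heg : I.strictD e.1 (some e) (some g))
    (hx : x ∈ F) (hxe : x.1 = e.1) : I.strictD e.1 (some e) (some x) := by
  have hgx := hg.2 x hx (hxe.trans hge.symm)
  rw [hge] at hgx
  exact I.strictD_of_strictD_of_prefD ⟨he, rfl⟩ ⟨hF hg.1, hge⟩ ⟨hF hx, hxe⟩ heg hgx

def IsFlatH (F : Set (D × H)) : Prop :=
  ∀ e ∈ F, ∀ f ∈ F, f.2 = e.2 → I.prefH e.2 (some e) (some f)

lemma Ch_eq_ChD {F : Set (D × H)} (h : I.IsFlatH (I.ChD F)) : I.Ch F = I.ChD F :=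
  Set.Subset.antisymm (fun _ he => he.1) fun e he => ⟨he, fun f hf hfe => h e he f hf hfe⟩

lemma prefD_muD_of_forall {σ : Set (D × H)} {e : D × H} (he : e ∈ I.E)
    (h : ∀ x ∈ σ, x.1 = e.1 → I.prefD e.1 (some e) (some x)) :
    I.prefD e.1 (some e) (muD σ e.1) := by
  rcases muD_eq_none_or_exists σ e.1 with hmu | ⟨x, hx, hxe, hmu⟩ <;> rw [hmu]
  · exact (I.prefD_none e.1 e ⟨he, rfl⟩).1
  · exact h x hx hxe

lemma strictD_muD_of_forall {σ : Set (D × H)} {e : D × H} (he : e ∈ I.E)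
    (h : ∀ x ∈ σ, x.1 = e.1 → I.strictD e.1 (some e) (some x)) :
    I.strictD e.1 (some e) (muD σ e.1) := by
  rcases muD_eq_none_or_exists σ e.1 with hmu | ⟨x, hx, hxe, hmu⟩ <;> rw [hmu]
  · exact I.prefD_none e.1 e ⟨he, rfl⟩
  · exact h x hx hxe

variable {I}

lemma isMatching.muD_eq_some {σ : Set (D × H)} (hσ : I.isMatching σ) {g : D × H} (hg : g ∈ σ) :
    muD σ g.1 = some g := by
  have hex : ∃ e, e ∈ σ ∧ e.1 = g.1 := ⟨g, hg, rfl⟩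
  rw [muD, dif_pos hex]
  exact congrArg some (hσ.2.1 _ hex.choose_spec.1 _ hg hex.choose_spec.2)

lemma isMatching.muH_eq_some {σ : Set (D × H)} (hσ : I.isMatching σ) {g : D × H} (hg : g ∈ σ) :
    muH σ g.2 = some g := by
  have hex : ∃ e, e ∈ σ ∧ e.2 = g.2 := ⟨g, hg, rfl⟩
  rw [muH, dif_pos hex]
  exact congrArg some (hσ.2.2 _ hex.choose_spec.1 _ hg hex.choose_spec.2)

lemma blocks_of_mem {σ : Set (D × H)} (hσ : I.isMatching σ) {e f : D × H} (he : e ∈ I.E)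
    (hf : f ∈ σ) (hfe : f.2 = e.2) (hd : I.prefD e.1 (some e) (muD σ e.1))
    (hh : I.prefH e.2 (some e) (some f))
    (hstrict : I.strictD e.1 (some e) (muD σ e.1) ∨ I.strictH e.2 (some e) (some f)) :
    I.blocks σ e := by
  have hmuH : muH σ e.2 = some f := hfe ▸ hσ.muH_eq_some hf
  have heσ : e ∉ σ := by
    intro heσ
    obtain rfl : f = e := hσ.2.2 f hf e heσ hfe
    rw [hσ.muD_eq_some heσ] at hstrict
    exact hstrict.elim (fun h => h.2 h.1) (fun h => h.2 h.1)
  refine ⟨he, heσ, hd, ?_⟩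
  rw [hmuH]
  exact ⟨⟨hh, fun _ => Option.some_ne_none f⟩,
    hstrict.imp_right fun h => ⟨h, fun _ => Option.some_ne_none f⟩⟩

variable (I)

/-- The conditions (R1) and (R5) on a set of removed edges, which are kept while it grows. -/
structure IsSafeRemoval (R : Set (D × H)) : Prop where
  subset : R ⊆ I.E
  notMem_stable : ∀ σ, I.stable σ → ∀ e ∈ R, e ∉ σ
  prefD_ge : ∀ e ∈ R, ∀ f ∈ I.E \ R, f.1 = e.1 → I.prefD e.1 (some e) (some f)

lemma isSafeRemoval_empty : I.IsSafeRemoval ∅ :=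
  ⟨Set.empty_subset _, fun _ _ _ he => he.elim, fun _ he => he.elim⟩

/-- A removed edge `e` overriding `f ∈ L` would block every matching through `f` that avoids the
removed edges. -/
def Overrides (R : Set (D × H)) (e f : D × H) : Prop :=
  e ∈ R ∧ f ∈ I.ChD (I.E \ R) ∧ f.2 = e.2 ∧ I.prefH e.2 (some e) (some f) ∧
    (I.strictH e.2 (some e) (some f) ∨
      ∀ x ∈ I.E \ R, x.1 = e.1 → I.strictD e.1 (some e) (some x))

variable {I}

lemma inter_setBlock_ChD_eq_empty {R : Set (D × H)} (hfin : (I.E \ R).Finite)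
    (hno : ∀ e f, ¬ I.Overrides R e f) : R ∩ I.setBlock (I.ChD (I.E \ R)) = ∅ := by
  refine Set.eq_empty_of_forall_notMem ?_
  rintro e ⟨heR, heE, -, -, hcmp, hsucc, hsim⟩
  rcases hcmp with hs | hs
  · obtain ⟨g, hg, hge, hpref⟩ := hsucc hs
    refine hno e g ⟨heR, hg, hge, hpref, Or.inr fun x hx hxe => ?_⟩
    rcases hs with hnone | ⟨g0, hg0, hg0e, hlt⟩
    · obtain ⟨m, hm, hmx⟩ := I.exists_mem_ChD Set.sdiff_subset hfin hx
      exact absurd (hmx.trans hxe) (hnone m hm)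
    · exact I.strictD_of_strictD_mem_ChD Set.sdiff_subset heE hg0 hg0e hlt hx hxe
  · obtain ⟨g, hg, hge, hlt⟩ := hsim hs
    exact hno e g ⟨heR, hg, hge, hlt.1, Or.inl hlt⟩

namespace IsSafeRemoval

variable {R : Set (D × H)} (hR : I.IsSafeRemoval R)
include hR

lemma stable_subset {σ : Set (D × H)} (hσ : I.stable σ) : σ ⊆ I.E \ R :=
  fun g hg => ⟨hσ.1.1 hg, fun hgR => hR.notMem_stable σ hσ g hgR hg⟩

lemma union {Δ : Set (D × H)} (hΔ : Δ ⊆ I.ChD (I.E \ R))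
    (hΔσ : ∀ σ, I.stable σ → ∀ e ∈ Δ, e ∉ σ) : I.IsSafeRemoval (R ∪ Δ) := by
  refine ⟨Set.union_subset hR.subset fun e he => (hΔ he).1.1, ?_, ?_⟩
  · rintro σ hσ e (heR | heΔ)
    exacts [hR.notMem_stable σ hσ e heR, hΔσ σ hσ e heΔ]
  · rintro e he f ⟨hfE, hfR⟩ hfe
    have hf : f ∈ I.E \ R := ⟨hfE, fun h => hfR (Or.inl h)⟩
    rcases he with heR | heΔ
    exacts [hR.prefD_ge e heR f hf hfe, (hΔ heΔ).2 f hf hfe]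

lemma notMem_stable_of_not_prefH {e f : D × H} (he : e ∈ I.ChD (I.E \ R))
    (hf : f ∈ I.ChD (I.E \ R)) (hfe : f.2 = e.2) (hef : ¬ I.prefH e.2 (some e) (some f))
    {σ : Set (D × H)} (hσ : I.stable σ) : e ∉ σ := by
  intro heσ
  have hfE : f ∈ I.E := hf.1.1
  have hfe' : I.prefH e.2 (some f) (some e) :=
    (I.prefH_total e.2 _ (some_mem_optH ⟨he.1.1, rfl⟩) _ (some_mem_optH ⟨hfE, hfe⟩)).resolve_left
      hef
  rw [← hfe] at hfe' hef
  exact hσ.2 f (I.blocks_of_mem hσ.1 hfE heσ hfe.symm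
    (I.prefD_muD_of_forall hfE fun x hx hxf => hf.2 x (hR.stable_subset hσ hx) hxf) hfe'
    (Or.inr ⟨hfe', hef⟩))

lemma notMem_stable_of_overrides {e f : D × H} (h : I.Overrides R e f) {σ : Set (D × H)}
    (hσ : I.stable σ) : f ∉ σ := by
  obtain ⟨heR, -, hfe, hpref, hstrict⟩ := h
  intro hfσ
  have heE := hR.subset heR
  have hσR := hR.stable_subset hσ
  refine hσ.2 e (I.blocks_of_mem hσ.1 heE hfσ hfe ?_ hpref (hstrict.symm.imp ?_ id))
  · exact I.prefD_muD_of_forall heE fun x hx hxe => hR.prefD_ge e heR x (hσR hx) hxe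
  · exact fun h => I.strictD_muD_of_forall heE fun x hx hxe => h x (hσR hx) hxe

lemma exists_mem_stable_ChD_of_hospital
    (hflat : I.IsFlatH (I.ChD (I.E \ R)))
    {σ : Set (D × H)} (hσ : I.stable σ) {x g : D × H} (hx : x ∈ I.ChD (I.E \ R)) (hgσ : g ∈ σ)
    (hg : g ∈ I.ChD (I.E \ R)) (hgx : g.2 = x.2) :
    ∃ y ∈ σ, y.1 = x.1 ∧ y ∈ I.ChD (I.E \ R) := by
  -- otherwise `x` blocks `σ`: its doctor strictly prefers it, its hospital is indifferent
  by_contra hfree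
  have hstrict := I.strictD_muD_of_forall hx.1.1 fun y hy hyx =>
    I.strictD_of_mem_ChD_of_notMem Set.sdiff_subset hx (hR.stable_subset hσ hy) hyx
      fun hyL => hfree ⟨y, hy, hyx, hyL⟩
  exact hσ.2 x (I.blocks_of_mem hσ.1 hx.1.1 hgσ hgx hstrict.1 (hflat x hx g hg hgx)
    (Or.inl hstrict))

end IsSafeRemoval

/-- The doctors of `D[E \ R]`. -/
abbrev ActiveDoctor (I : SSMC D H) (R : Set (D × H)) : Type := {d : D // ∃ e ∈ I.E \ R, e.1 = d}

section Hall

variable [Fintype H]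

noncomputable def topHospitals (I : SSMC D H) (R : Set (D × H)) (d : D) : Finset H :=
  Finset.univ.filter fun h => (d, h) ∈ I.ChD (I.E \ R)

lemma mem_topHospitals {R : Set (D × H)} {d : D} {h : H} :
    h ∈ I.topHospitals R d ↔ (d, h) ∈ I.ChD (I.E \ R) := by
  simp [topHospitals]

lemma topHospitals_nonempty {R : Set (D × H)} (hfin : (I.E \ R).Finite) (d : I.ActiveDoctor R) :
    (I.topHospitals R d).Nonempty := by
  obtain ⟨e, he, hed⟩ := d.2
  obtain ⟨m, hm, hme⟩ := I.exists_mem_ChD Set.sdiff_subset hfin he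
  refine ⟨m.2, mem_topHospitals.mpr ?_⟩
  rwa [← hed, ← hme]

namespace IsSafeRemoval

variable {R : Set (D × H)} (hR : I.IsSafeRemoval R)
include hR

lemma preproc_of_injective (hfin : (I.E \ R).Finite)
    (hflat : I.IsFlatH (I.ChD (I.E \ R)))
    (hno : ∀ e f, ¬ I.Overrides R e f) {m : I.ActiveDoctor R → H} (hm : m.Injective)
    (hmt : ∀ d, m d ∈ I.topHospitals R d.1) : I.preproc R (Set.range fun d => (d.1, m d)) := by
  have hCh : I.Ch (I.E \ R) = I.ChD (I.E \ R) := I.Ch_eq_ChD hflat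
  have hμL : (Set.range fun d => (d.1, m d)) ⊆ I.ChD (I.E \ R) :=
    Set.range_subset_iff.mpr fun d => mem_topHospitals.mp (hmt d)
  refine ⟨hR.subset, ⟨fun e he => (hμL he).1.1, ?_, ?_⟩, hR.notMem_stable, hCh ▸ hμL,
    fun d hd => ⟨_, ⟨⟨d, hd⟩, rfl⟩, rfl⟩, hCh ▸ inter_setBlock_ChD_eq_empty hfin hno, ?_⟩
  · rintro _ ⟨a, rfl⟩ _ ⟨b, rfl⟩ h
    rw [Subtype.ext h]
  · rintro _ ⟨a, rfl⟩ _ ⟨b, rfl⟩ h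
    rw [hm h]
  · rintro d e heR rfl f hf hfe
    exact hR.prefD_ge e heR f hf hfe

/-- Removing from the minimal Hall violator `s` its doctors that `σ` matches along `L` would leave
a smaller violator, so there are none, and then `σ` fills no hospital next to `s` along `L`. -/
lemma notMem_stable_of_hall_violator
    (hflat : I.IsFlatH (I.ChD (I.E \ R))) {s : Finset (I.ActiveDoctor R)}
    (hs : (s.biUnion fun d => I.topHospitals R d.1).card < s.card)
    (hmin : ∀ s' : Finset (I.ActiveDoctor R),
      (s'.biUnion fun d => I.topHospitals R d.1).card < s'.card → s.card ≤ s'.card)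
    {σ : Set (D × H)} (hσ : I.stable σ) {e : D × H} (heσ : e ∈ σ) (heL : e ∈ I.ChD (I.E \ R)) :
    e.2 ∉ s.biUnion fun d => I.topHospitals R d.1 := by
  set A := s.filter fun d => ∃ g ∈ σ, g.1 = d.1 ∧ g ∈ I.ChD (I.E \ R)
  have hfree : ∀ d ∈ s \ A, ∀ g ∈ σ, g ∈ I.ChD (I.E \ R) → g.2 ∉ I.topHospitals R d := by
    intro d hd g hgσ hgL hgd
    obtain ⟨hds, hdA⟩ := Finset.mem_sdiff.mp hd
    exact hdA (Finset.mem_filter.mpr ⟨hds,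
      hR.exists_mem_stable_ChD_of_hospital hflat hσ (mem_topHospitals.mp hgd) hgσ hgL rfl⟩)
  intro he
  obtain ⟨d, hds, hde⟩ := Finset.mem_biUnion.mp he
  have hdA : d ∈ A := by_contra fun hdA => hfree d (Finset.mem_sdiff.mpr ⟨hds, hdA⟩) e heσ heL hde
  have hmatched : ∀ d ∈ A, ∃ g, g ∈ σ ∧ g.1 = d.1 ∧ g ∈ I.ChD (I.E \ R) :=
    fun d hd => (Finset.mem_filter.mp hd).2
  have : Nonempty (D × H) := ⟨e⟩
  choose! g hgσ hgd hgL using hmatched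
  have hinj : Set.InjOn (fun d => (g d).2) A := fun a ha b hb hab =>
    Subtype.ext ((hgd a ha).symm.trans
      ((congrArg Prod.fst (hσ.1.2.2 _ (hgσ a ha) _ (hgσ b hb) hab)).trans (hgd b hb)))
  have hgt : ∀ d ∈ A, (g d).2 ∈ I.topHospitals R d := fun d hd =>
    mem_topHospitals.mpr (by rw [← hgd d hd]; exact hgL d hd)
  have hviol := Finset.card_biUnion_sdiff_lt_card_sdiff _ (Finset.filter_subset _ s) hs hinj hgt
    fun i hi j hj => hfree i hi (g j) (hgσ j hj) (hgL j hj)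
  exact (hmin _ hviol).not_gt
    (Finset.card_lt_card (Finset.sdiff_ssubset (Finset.filter_subset _ s) ⟨d, hdA⟩))

end IsSafeRemoval

end Hall

namespace IsSafeRemoval

lemma exists_preproc_or_extend [Fintype D] [Fintype H] {R : Set (D × H)}
    (hR : I.IsSafeRemoval R) :
    (∃ μ, I.preproc R μ) ∨ ∃ Δ : Set (D × H), Δ.Nonempty ∧ Δ ⊆ I.ChD (I.E \ R) ∧
      ∀ σ, I.stable σ → ∀ e ∈ Δ, e ∉ σ := by
  have hfin : (I.E \ R).Finite := Set.toFinite _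
  by_cases hflat : I.IsFlatH (I.ChD (I.E \ R))
  swap
  · unfold IsFlatH at hflat
    push Not at hflat
    obtain ⟨e, he, f, hf, hfe, hef⟩ := hflat
    exact Or.inr ⟨{e}, Set.singleton_nonempty e, Set.singleton_subset_iff.mpr he,
      fun σ hσ x hx => hx ▸ hR.notMem_stable_of_not_prefH he hf hfe hef hσ⟩
  by_cases hover : ∃ e f, I.Overrides R e f
  · obtain ⟨e, f, h⟩ := hover
    exact Or.inr ⟨{f}, Set.singleton_nonempty f, Set.singleton_subset_iff.mpr h.2.1,
      fun σ hσ x hx => hx ▸ hR.notMem_stable_of_overrides h hσ⟩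
  push Not at hover
  set t := fun d : I.ActiveDoctor R => I.topHospitals R d.1
  by_cases hHall : ∀ s : Finset (I.ActiveDoctor R), s.card ≤ (s.biUnion t).card
  · obtain ⟨m, hm, hmt⟩ := (Finset.all_card_le_biUnion_card_iff_exists_injective t).mp hHall
    exact Or.inl ⟨_, hR.preproc_of_injective hfin hflat hover hm hmt⟩
  push Not at hHall
  obtain ⟨s, hs, hmin⟩ := Finset.exists_min_image
    (Finset.univ.filter fun s => (s.biUnion t).card < s.card) Finset.card
    ⟨_, Finset.mem_filter.mpr ⟨Finset.mem_univ _, hHall.choose_spec⟩⟩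
  replace hs := (Finset.mem_filter.mp hs).2
  obtain ⟨d, hd⟩ := Finset.card_pos.mp (Nat.zero_lt_of_lt hs)
  obtain ⟨h, hh⟩ := I.topHospitals_nonempty hfin d
  refine Or.inr ⟨{e ∈ I.ChD (I.E \ R) | e.2 ∈ s.biUnion t},
    ⟨(d.1, h), mem_topHospitals.mp hh, Finset.mem_biUnion.mpr ⟨d, hd, hh⟩⟩, fun e he => he.1,
    fun σ hσ e he heσ => hR.notMem_stable_of_hall_violator hflat hs
      (fun s' hs' => hmin s' (Finset.mem_filter.mpr ⟨Finset.mem_univ _, hs'⟩)) hσ heσ he.1 he.2⟩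

theorem exists_preproc [Fintype D] [Fintype H] {R : Set (D × H)} (hR : I.IsSafeRemoval R) :
    ∃ R' μ : Set (D × H), I.preproc R' μ := by
  induction hn : (I.E \ R).ncard using Nat.strong_induction_on generalizing R with
  | _ n ih =>
  rcases hR.exists_preproc_or_extend with ⟨μ, hμ⟩ | ⟨Δ, ⟨x, hx⟩, hΔL, hΔ⟩
  · exact ⟨R, μ, hμ⟩
  refine ih _ ?_ (hR.union hΔL hΔ) rfl
  rw [← hn, ← Set.sdiff_sdiff]
  exact Set.ncard_lt_ncard
    ((Set.ssubset_iff_of_subset Set.sdiff_subset).mpr ⟨x, (hΔL hx).1, fun h => h.2 hx⟩)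
    (Set.toFinite _)

end IsSafeRemoval

end SSMC

/-- Lemma: pre-processing: every instance admits a subset `R ⊆ E`
and a matching `μ` satisfying (R1)–(R5). -/
theorem preprocessing_exists {D H : Type} [Fintype D] [Fintype H] (I : SSMC D H) :
    ∃ R μ : Set (D × H), I.preproc R μ :=
  I.isSafeRemoval_empty.exists_preproc
end

section
/- Let (R, μ) satisfy the pre-processing conditions and suppose that μ is a stable matching in G. Then for every stable matching σ in G and every doctor d ∈ D, μ(d) ≿_d σ(d) (where an unmatched doctor is treated as matched to ∅). -/
open Classical

variable {D H : Type}

theorem mem_of_muD_eq_some {μ : Set (D × H)} {d : D} {e : D × H} (he : muD μ d = some e) :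
    e ∈ μ ∧ e.1 = d := by
  unfold muD at he
  split_ifs at he with hd
  exact Option.some_injective _ he ▸ hd.choose_spec

theorem muD_isSome {μ : Set (D × H)} {d : D} {e : D × H} (he : e ∈ μ) (hed : e.1 = d) :
    (muD μ d).isSome := by
  simp only [muD, dif_pos (⟨e, he, hed⟩ : ∃ e, e ∈ μ ∧ e.1 = d), Option.isSome_some]

namespace SSMC

variable (I : SSMC D H)

theorem prefD_none_none (d : D) : I.prefD d none none := by
  have hnone : (none : Option (D × H)) ∈ optD I.E d := Set.mem_insert _ _
  exact (I.prefD_total d none hnone none hnone).elim id id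

theorem prefD_muD_none {μ : Set (D × H)} (hμ : μ ⊆ I.E) (d : D) :
    I.prefD d (muD μ d) none := by
  cases hd : muD μ d with
  | none => exact I.prefD_none_none d
  | some e =>
    obtain ⟨he, hed⟩ := mem_of_muD_eq_some hd
    exact (I.prefD_none d e ⟨hμ he, hed⟩).1

variable {I}

theorem preproc.prefD_muD_of_mem_diff {R μ : Set (D × H)} (hpre : I.preproc R μ)
    {f : D × H} (hf : f ∈ I.E \ R) : I.prefD f.1 (muD μ f.1) (some f) := by
  obtain ⟨-, -, -, hR2, hR3, -⟩ := hpre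
  obtain ⟨e₀, he₀, he₀d⟩ := hR3 f.1 ⟨f, hf, rfl⟩
  obtain ⟨e, hd⟩ := Option.isSome_iff_exists.mp (muD_isSome he₀ he₀d)
  obtain ⟨he, hed⟩ := mem_of_muD_eq_some hd
  have heChD : e ∈ I.ChD (I.E \ R) := (hR2 he).1
  rw [hd, ← hed]
  exact heChD.2 f hf hed.symm

end SSMC

theorem mu_doctor_optimal_general {D H : Type}
    (I : SSMC D H) (R μ : Set (D × H)) (hpre : I.preproc R μ) :
    ∀ σ : Set (D × H), I.stable σ → ∀ d : D, I.prefD d (muD μ d) (muD σ d) := by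
  intro σ hσ d
  cases hσd : muD σ d with
  | none => exact I.prefD_muD_none hpre.2.1.1 d
  | some f =>
    obtain ⟨hfσ, rfl⟩ := mem_of_muD_eq_some hσd
    have hfR : f ∉ R := fun hfR => hpre.2.2.1 σ hσ f hfR hfσ
    exact hpre.prefD_muD_of_mem_diff ⟨hσ.1.1 hfσ, hfR⟩

/-- if `(R, μ)` satisfies the pre-processing conditions and `μ`
is stable, then every doctor weakly prefers `μ` to any stable matching `σ`. -/
theorem mu_doctor_optimal {D H : Type} [Fintype D] [Fintype H]
    (I : SSMC D H) (R μ : Set (D × H)) (hpre : I.preproc R μ)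
    (hstab : I.stable μ) :
    ∀ σ : Set (D × H), I.stable σ → ∀ d : D, I.prefD d (muD μ d) (muD σ d) :=
  mu_doctor_optimal_general I R μ hpre
end

section
/- Under assumption (★), let (R, μ) satisfy the pre-processing conditions, let σ be a stable matching in G, and let h ∈ H \ S be a hospital with σ(h) = (d,h) for some doctor d. Then every edge (d,h′) ∈ Ch_d(E \ R) satisfies h′ ∈ H \ S (that is, d belongs to the set D⁺ of doctors of D[E \ R] all of whose most-preferred edges among E \ R go to hospitals outside S). -/
open Classical

variable {D H : Type}

namespace SSMC

variable {I : SSMC D H}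

theorem preproc.mem_diff_of_mem_stable {R μ σ : Set (D × H)} (hpre : I.preproc R μ)
    (hσ : I.stable σ) {e : D × H} (he : e ∈ σ) : e ∈ I.E \ R :=
  ⟨hσ.1.1 he, fun heR => hpre.2.2.1 σ hσ e heR he⟩

theorem starAssumption.not_prefD (hstar : I.starAssumption) {d : D} {h h' : H}
    (hE : (d, h) ∈ I.E) (hE' : (d, h') ∈ I.E) (hS : h ∉ I.S) (hS' : h' ∈ I.S) :
    ¬ I.prefD d (some (d, h')) (some (d, h)) :=
  (hstar d h' h hE' hE hS' hS).2

theorem starAssumption.snd_notMem_of_mem_ChD (hstar : I.starAssumption) {F : Set (D × H)}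
    (hF : F ⊆ I.E) {d : D} {h h' : H} (hdh : (d, h) ∈ F) (hS : h ∉ I.S)
    (hch : (d, h') ∈ I.ChD F) : h' ∉ I.S := fun hS' =>
  hstar.not_prefD (hF hdh) (hF hch.1) hS hS' (hch.2 (d, h) hdh rfl)

end SSMC

theorem matched_outside_S_doctor_in_Dplus_general {D H : Type}
    (I : SSMC D H) (hstar : I.starAssumption)
    (R μ : Set (D × H)) (hpre : I.preproc R μ)
    (σ : Set (D × H)) (hσ : I.stable σ)
    (h : H) (hS : h ∉ I.S) (d : D) (hm : (d, h) ∈ σ) :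
    ∀ h' : H, (d, h') ∈ I.ChD (I.E \ R) → h' ∉ I.S := fun _ hch =>
  hstar.snd_notMem_of_mem_ChD Set.sdiff_subset (hpre.mem_diff_of_mem_stable hσ hm) hS hch

/-- under assumption (★), if `(R, μ)` satisfies the pre-processing
conditions, `σ` is stable, `h ∉ S` and `σ(h) = (d, h)`, then every edge
`(d, h') ∈ Ch_d(E \ R)` satisfies `h' ∉ S` (i.e. `d ∈ D⁺`). -/
theorem matched_outside_S_doctor_in_Dplus {D H : Type} [Fintype D] [Fintype H]
    (I : SSMC D H) (hstar : I.starAssumption)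
    (R μ : Set (D × H)) (hpre : I.preproc R μ)
    (σ : Set (D × H)) (hσ : I.stable σ)
    (h : H) (hS : h ∉ I.S) (d : D) (hm : (d, h) ∈ σ) :
    ∀ h' : H, (d, h') ∈ I.ChD (I.E \ R) → h' ∉ I.S :=
  matched_outside_S_doctor_in_Dplus_general I hstar R μ hpre σ hσ h hS d hm
end

section
/- In the bounded-degree setting, for every connected component X of G* = (D, H; L) with |X| ≥ 2 (i.e., every X ∈ C), we have |D_X| ≤ |H_X|. -/
open Classical

variable {D H : Type}

/-- Adjacency relation on `D ⊕ H` induced by an edge set `L`. -/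
def adjRel (L : Set (D × H)) : (D ⊕ H) → (D ⊕ H) → Prop
  | Sum.inl d, Sum.inr h => (d, h) ∈ L
  | Sum.inr h, Sum.inl d => (d, h) ∈ L
  | _, _ => False

/-- `X` is a connected component of the bipartite graph `(D, H; L)`. -/
def isComponent (L : Set (D × H)) (X : Set (D ⊕ H)) : Prop :=
  ∃ v ∈ X, X = {w | Relation.ReflTransGen (adjRel L) v w}

/-- `D_X`: the doctors in `X`. -/
def Dside (X : Set (D ⊕ H)) : Set D := {d | Sum.inl d ∈ X}

/-- `H_X`: the hospitals in `X`. -/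
def Hside (X : Set (D ⊕ H)) : Set H := {h | Sum.inr h ∈ X}

namespace SSMC

variable (I : SSMC D H)

/-- `Leaf_L(D_X)`: the doctors of `X` incident to exactly one edge of `L = Ch(E \ R)`. -/
def leafSet (R : Set (D × H)) (X : Set (D ⊕ H)) : Set D :=
  {d ∈ Dside X | (edgesD (I.Lset R) d).ncard = 1}

/-- `X ∈ 𝓒`: connected component of `G* = (D, H; Ch(E \ R))` with at least two vertices. -/
def memC (R : Set (D × H)) (X : Set (D ⊕ H)) : Prop :=
  isComponent (I.Lset R) X ∧ 2 ≤ X.ncard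

/-- `X ∈ 𝓟`. -/
def memP (R : Set (D × H)) (X : Set (D ⊕ H)) : Prop :=
  I.memC R X ∧ (Dside X).ncard = (Hside X).ncard

/-- `X ∈ 𝓠`. -/
def memQ (R : Set (D × H)) (X : Set (D ⊕ H)) : Prop :=
  I.memC R X ∧ (Dside X).ncard < (Hside X).ncard

/-- `X ∈ 𝓟*`. -/
def memPstar (R : Set (D × H)) (X : Set (D ⊕ H)) : Prop :=
  I.memP R X ∧ (I.leafSet R X).ncard = 1

/-- `X ∈ 𝓡`: a component consisting of a single hospital `h ∈ H \ S` with `R(h) ≠ ∅`. -/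
def memRcal (R : Set (D × H)) (X : Set (D ⊕ H)) : Prop :=
  isComponent (I.Lset R) X ∧
    ∃ h : H, X = {Sum.inr h} ∧ h ∉ I.S ∧ ∃ e ∈ R, e.2 = h

end SSMC

/-!
Every doctor `d` of a component `X ∈ C` is incident to an edge of `L`, because `X` has a second
vertex; so `d` is matched by `μ` (R3). Its partner is joined to `d` in `L` (R2), hence lies in `X`,
and since `μ` is a matching, `d ↦ μ(d)` injects `D_X` into `H_X`.
-/

theorem ncard_le_ncard_of_forall_exists_mem {α β : Type*} {μ : Set (α × β)}
    (hμ : ∀ e ∈ μ, ∀ f ∈ μ, e.2 = f.2 → e = f) {A : Set α} {B : Set β} (hB : B.Finite)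
    (hA : ∀ a ∈ A, ∃ b ∈ B, (a, b) ∈ μ) : A.ncard ≤ B.ncard := by
  set M := {e ∈ μ | e.2 ∈ B}
  have hinj : M.InjOn Prod.snd := fun e he f hf => hμ e he.1 f hf.1
  have hMB : Prod.snd '' M ⊆ B := Set.image_subset_iff.mpr fun e he => he.2
  have hM : M.Finite := (hB.subset hMB).of_finite_image hinj
  have hAM : A ⊆ Prod.fst '' M := fun a ha => by
    obtain ⟨b, hb, hab⟩ := hA a ha
    exact ⟨(a, b), ⟨hab, hb⟩, rfl⟩
  calc A.ncard ≤ (Prod.fst '' M).ncard := Set.ncard_le_ncard hAM (hM.image _)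
    _ ≤ M.ncard := Set.ncard_image_le hM
    _ = (Prod.snd '' M).ncard := hinj.ncard_image.symm
    _ ≤ B.ncard := Set.ncard_le_ncard hMB hB

theorem adjRel_symm {L : Set (D × H)} {v w : D ⊕ H} (h : adjRel L v w) : adjRel L w v := by
  rcases v with _ | _ <;> rcases w with _ | _ <;> exact h

namespace isComponent

variable {L : Set (D × H)} {X : Set (D ⊕ H)}

theorem mem_of_adj (hX : isComponent L X) {v w : D ⊕ H} (hv : v ∈ X) (hvw : adjRel L v w) :
    w ∈ X := by
  obtain ⟨_, _, rfl⟩ := hX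
  exact Relation.ReflTransGen.tail hv hvw

theorem exists_adj (hX : isComponent L X) (hnt : X.Nontrivial) {w : D ⊕ H} (hw : w ∈ X) :
    ∃ u, adjRel L w u := by
  obtain ⟨v, -, rfl⟩ := hX
  rcases hw.cases_tail with rfl | ⟨u, -, huw⟩
  · obtain ⟨w', hw', hw'v⟩ := hnt.exists_ne w
    rcases Relation.ReflTransGen.cases_head hw' with rfl | ⟨u, hwu, -⟩
    · exact absurd rfl hw'v
    · exact ⟨u, hwu⟩
  · exact ⟨u, adjRel_symm huw⟩

theorem exists_edge (hX : isComponent L X) (hnt : X.Nontrivial) {d : D} (hd : Sum.inl d ∈ X) :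
    ∃ h, (d, h) ∈ L := by
  obtain ⟨_ | h, hdh⟩ := hX.exists_adj hnt hd
  · exact hdh.elim
  · exact ⟨h, hdh⟩

end isComponent

namespace SSMC

variable {I : SSMC D H} {R μ : Set (D × H)}

theorem Lset_subset (R : Set (D × H)) : I.Lset R ⊆ I.E \ R := fun _ he => he.1.1

theorem preproc.exists_partner_mem (hpre : I.preproc R μ) {X : Set (D ⊕ H)}
    (hX : isComponent (I.Lset R) X) (hnt : X.Nontrivial) {d : D} (hd : d ∈ Dside X) :
    ∃ h ∈ Hside X, (d, h) ∈ μ := by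
  obtain ⟨-, -, -, hR2, hR3, -⟩ := hpre
  obtain ⟨h, hdh⟩ := hX.exists_edge hnt hd
  obtain ⟨⟨d', h'⟩, hμ, rfl⟩ := hR3 d ⟨(d, h), Lset_subset R hdh, rfl⟩
  exact ⟨h', hX.mem_of_adj hd (hR2 hμ), hμ⟩

end SSMC

theorem component_doctors_le_hospitals_general {D H : Type} [Fintype H]
    (I : SSMC D H)
    (R μ : Set (D × H)) (hpre : I.preproc R μ)
    (X : Set (D ⊕ H)) (hX : isComponent (I.Lset R) X) (h2 : 2 ≤ X.ncard) :
    (Dside X).ncard ≤ (Hside X).ncard := by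
  have hnt : X.Nontrivial := (Set.one_lt_ncard_iff_nontrivial_and_finite.mp h2).1
  have hμ : ∀ e ∈ μ, ∀ f ∈ μ, e.2 = f.2 → e = f := hpre.2.1.2.2
  exact ncard_le_ncard_of_forall_exists_mem hμ (Set.toFinite _)
    fun d hd => hpre.exists_partner_mem hX hnt hd

/-- in the bounded-degree setting, every connected component `X`
of `G* = (D, H; L)` with at least two vertices satisfies `|D_X| ≤ |H_X|`. -/
theorem component_doctors_le_hospitals {D H : Type} [Fintype D] [Fintype H]
    (I : SSMC D H) (hdeg : ∀ d : D, (edgesD I.E d).ncard ≤ 2)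
    (R μ : Set (D × H)) (hpre : I.preproc R μ)
    (X : Set (D ⊕ H)) (hX : isComponent (I.Lset R) X) (h2 : 2 ≤ X.ncard) :
    (Dside X).ncard ≤ (Hside X).ncard :=
  component_doctors_le_hospitals_general I R μ hpre X hX h2
end

section
/- In the bounded-degree setting, for every X ∈ P we have |Leaf_L(D_X)| ≤ 1, where Leaf_L(D_X) = {d ∈ D_X : |L(d)| = 1}. -/
open Classical

variable {D H : Type}

/-! A component `X` of `(D, H; L)` is connected, so it spans at least `|X| - 1` edges of `L`,
each with its doctor in `D_X`. A doctor has at most two edges and a leaf exactly one, so these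
edges number at most `2 |D_X| - |Leaf_L(D_X)|`. For `X ∈ 𝓟` we have `|X| = 2 |D_X|`, whence
`|Leaf_L(D_X)| ≤ 1`. -/

def bipGraph (L : Set (D × H)) : SimpleGraph (D ⊕ H) where
  Adj := adjRel L
  symm := ⟨by rintro (d | h) (d' | h') hadj <;> exact hadj⟩
  loopless := ⟨by rintro (d | h) hadj <;> exact hadj⟩

lemma isComponent.exists_supp_eq {L : Set (D × H)} {X : Set (D ⊕ H)} (hX : isComponent L X) :
    ∃ C : (bipGraph L).ConnectedComponent, C.supp = X := by
  obtain ⟨v, -, rfl⟩ := hX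
  refine ⟨(bipGraph L).connectedComponentMk v, Set.ext fun w => ?_⟩
  rw [SimpleGraph.ConnectedComponent.mem_supp_iff, SimpleGraph.ConnectedComponent.eq,
    SimpleGraph.reachable_comm, SimpleGraph.reachable_iff_reflTransGen]
  rfl

lemma ncard_eq_ncard_Dside_add_ncard_Hside (X : Set (D ⊕ H)) (hX : X.Finite) :
    X.ncard = (Dside X).ncard + (Hside X).ncard := by
  have hD : (Sum.inl ⁻¹' X).Finite := hX.preimage Sum.inl_injective.injOn
  have hH : (Sum.inr ⁻¹' X).Finite := hX.preimage Sum.inr_injective.injOn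
  conv_lhs => rw [← Set.image_preimage_inl_union_image_preimage_inr X]
  rw [Set.ncard_union_eq Set.disjoint_image_inl_image_inr (hD.image _) (hH.image _),
    Set.ncard_image_of_injective _ Sum.inl_injective,
    Set.ncard_image_of_injective _ Sum.inr_injective]
  rfl

lemma SSMC.Lset_subset_s10 (I : SSMC D H) (R : Set (D × H)) : I.Lset R ⊆ I.E :=
  fun _ he => he.1.1.1

section Counting

variable [Fintype D] [Fintype H]

lemma ncard_supp_le_ncard_edges_add_one {L : Set (D × H)}
    (C : (bipGraph L).ConnectedComponent) :
    C.supp.ncard ≤ {e ∈ L | e.1 ∈ Dside C.supp}.ncard + 1 := by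
  set T := {e ∈ L | e.1 ∈ Dside C.supp}
  let toEdge : T → C.toSimpleGraph.edgeSet := fun ⟨(d, h), hL, hd⟩ =>
    have hadj : (bipGraph L).Adj (Sum.inl d) (Sum.inr h) := hL
    ⟨s(⟨Sum.inl d, hd⟩, ⟨Sum.inr h, (C.mem_supp_congr_adj hadj).1 hd⟩), hadj⟩
  have hsurj : Function.Surjective toEdge := by
    rintro ⟨z, hz⟩
    induction z using Sym2.ind with
    | _ a b =>
    rcases a with ⟨d | h, ha⟩ <;> rcases b with ⟨d' | h', hb⟩
    · exact hz.elim
    · exact ⟨⟨(d, h'), hz, ha⟩, rfl⟩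
    · exact ⟨⟨(d', h), hz, hb⟩, Subtype.ext Sym2.eq_swap⟩
    · exact hz.elim
  calc C.supp.ncard = Nat.card C.supp := (Nat.card_coe_set_eq _).symm
    _ ≤ Nat.card C.toSimpleGraph.edgeSet + 1 :=
        C.connected_toSimpleGraph.card_vert_le_card_edgeSet_add_one
    _ ≤ Nat.card T + 1 := by gcongr; exact Nat.card_le_card_of_surjective toEdge hsurj
    _ = T.ncard + 1 := by rw [Nat.card_coe_set_eq]

lemma ncard_edges_add_ncard_leaves_le {L E : Set (D × H)} (hLE : L ⊆ E)
    (hdeg : ∀ d, (edgesD E d).ncard ≤ 2) (A : Set D) :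
    {e ∈ L | e.1 ∈ A}.ncard + {d ∈ A | (edgesD L d).ncard = 1}.ncard ≤ 2 * A.ncard := by
  have hdeg_leaf : ∀ d, (edgesD L d).ncard + (if (edgesD L d).ncard = 1 then 1 else 0) ≤ 2 := by
    intro d
    split_ifs with hleaf
    · omega
    · have hsub : edgesD L d ⊆ edgesD E d := fun e he => ⟨hLE he.1, he.2⟩
      have := Set.ncard_le_ncard hsub (Set.toFinite _)
      have := hdeg d
      omega
  have hedges : {e ∈ L | e.1 ∈ A} = ⋃ d ∈ A.toFinset, edgesD L d := by
    ext e; simp [edgesD, and_comm]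
  have hleaves : {d ∈ A | (edgesD L d).ncard = 1}.ncard
      = ∑ d ∈ A.toFinset, if (edgesD L d).ncard = 1 then 1 else 0 := by
    rw [← Finset.card_filter, Set.ncard_eq_toFinset_card']
    congr 1; ext d; simp
  calc {e ∈ L | e.1 ∈ A}.ncard + {d ∈ A | (edgesD L d).ncard = 1}.ncard
      ≤ ∑ d ∈ A.toFinset, ((edgesD L d).ncard + if (edgesD L d).ncard = 1 then 1 else 0) := by
        rw [Finset.sum_add_distrib, hedges, hleaves]
        gcongr
        exact A.toFinset.set_ncard_biUnion_le _
    _ ≤ ∑ _d ∈ A.toFinset, 2 := Finset.sum_le_sum fun d _ => hdeg_leaf d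
    _ = 2 * A.ncard := by rw [Finset.sum_const, smul_eq_mul, mul_comm, Set.ncard_eq_toFinset_card']

end Counting

theorem memP_leaf_le_one_general {D H : Type} [Fintype D] [Fintype H]
    (I : SSMC D H) (hdeg : ∀ d : D, (edgesD I.E d).ncard ≤ 2)
    (R : Set (D × H))
    (X : Set (D ⊕ H)) (hX : I.memP R X) :
    (I.leafSet R X).ncard ≤ 1 := by
  obtain ⟨⟨hcomp, -⟩, hDH⟩ := hX
  obtain ⟨C, rfl⟩ := hcomp.exists_supp_eq
  have hspan := ncard_supp_le_ncard_edges_add_one C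
  have hcount := ncard_edges_add_ncard_leaves_le (I.Lset_subset_s10 R) hdeg (Dside C.supp)
  have hsides := ncard_eq_ncard_Dside_add_ncard_Hside C.supp (Set.toFinite _)
  unfold SSMC.leafSet
  omega

/-- in the bounded-degree setting, every `X ∈ 𝓟` has at most
one leaf doctor: `|Leaf_L(D_X)| ≤ 1`. -/
theorem memP_leaf_le_one {D H : Type} [Fintype D] [Fintype H]
    (I : SSMC D H) (hdeg : ∀ d : D, (edgesD I.E d).ncard ≤ 2)
    (R μ : Set (D × H)) (hpre : I.preproc R μ)
    (X : Set (D ⊕ H)) (hX : I.memP R X) :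
    (I.leafSet R X).ncard ≤ 1 :=
  memP_leaf_le_one_general I hdeg R X hX
end

section
/- In the bounded-degree setting, for every X ∈ Q and every hospital h ∈ H_X, there exists a matching ξ in G such that ξ ⊆ L(D_X) (the edges of L incident to doctors of D_X), ξ(h) = ∅, and ξ(d) ≠ ∅ for every doctor d ∈ D_X. -/
open Classical

variable {D H : Type}

/-!
Root a breadth-first search tree of the component `X` at the hospital `h`. Every other
hospital of `X` has a parent, which is a doctor. A doctor has at most two neighbours and one of
them is its own parent, so it is the parent of at most one hospital. Matching each hospital of
`H_X \ {h}` to its parent therefore gives a matching avoiding `h` with `|H_X| - 1 ≥ |D_X|` edges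
at distinct doctors of `D_X`, which must then cover all of `D_X`.
-/

namespace SimpleGraph

variable {V : Type} {G : SimpleGraph V} {r w : V}

theorem Reachable.exists_adj_dist_add_one_eq (hr : G.Reachable r w) (hne : w ≠ r) :
    ∃ u, G.Adj u w ∧ G.dist r u + 1 = G.dist r w := by
  obtain ⟨p, hp⟩ := hr.symm.exists_walk_length_eq_dist
  have hnil : ¬ p.Nil := Walk.not_nil_of_ne hne
  refine ⟨p.snd, (p.adj_snd hnil).symm, ?_⟩
  have htail : G.dist p.snd r ≤ p.tail.length := dist_le _
  have hlen := p.length_tail_add_one hnil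
  rw [dist_comm] at htail hp
  have hstep := (p.adj_snd hnil).diff_dist_adj (u := r)
  omega

/-- A parent of `w` in a breadth-first search tree rooted at `r`
(junk value `w` if `w` is `r` or is not reachable from `r`). -/
noncomputable def bfsParent (G : SimpleGraph V) (r w : V) : V :=
  if h : ∃ u, G.Adj u w ∧ G.dist r u + 1 = G.dist r w then h.choose else w

theorem bfsParent_spec (hr : G.Reachable r w) (hne : w ≠ r) :
    G.Adj (G.bfsParent r w) w ∧ G.dist r (G.bfsParent r w) + 1 = G.dist r w := by
  have hex := hr.exists_adj_dist_add_one_eq hne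
  rw [bfsParent, dif_pos hex]
  exact hex.choose_spec

/-- The parent of `v` is a neighbour of `v` that is not a child of `v`. -/
theorem eq_of_bfsParent_eq {v c₁ c₂ : V} (hfin : (G.neighborSet v).Finite)
    (hdeg : (G.neighborSet v).ncard ≤ 2) (hvr : v ≠ r)
    (hr₁ : G.Reachable r c₁) (hne₁ : c₁ ≠ r) (hp₁ : G.bfsParent r c₁ = v)
    (hr₂ : G.Reachable r c₂) (hne₂ : c₂ ≠ r) (hp₂ : G.bfsParent r c₂ = v) :
    c₁ = c₂ := by
  obtain ⟨hadj₁, hdist₁⟩ := bfsParent_spec hr₁ hne₁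
  obtain ⟨hadj₂, hdist₂⟩ := bfsParent_spec hr₂ hne₂
  rw [hp₁] at hadj₁ hdist₁
  rw [hp₂] at hadj₂ hdist₂
  have hrv : G.Reachable r v := hr₁.trans hadj₁.reachable.symm
  obtain ⟨hadj, hdist⟩ := bfsParent_spec hrv hvr
  by_contra hne
  have hthree : 2 < (G.neighborSet v).ncard :=
    (Set.two_lt_ncard hfin).2 ⟨c₁, hadj₁, c₂, hadj₂, G.bfsParent r v, hadj.symm, hne,
      fun h => by rw [h] at hdist₁; omega, fun h => by rw [h] at hdist₂; omega⟩
  omega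

end SimpleGraph

def bipartiteGraph (L : Set (D × H)) : SimpleGraph (D ⊕ H) where
  Adj := adjRel L
  symm := ⟨by rintro (d | h) (d' | h') <;> simp [adjRel]⟩
  loopless := ⟨by rintro (d | h) <;> simp [adjRel]⟩

section Bipartite

variable {L : Set (D × H)} {X : Set (D ⊕ H)}

theorem edgesD_mono {E F : Set (D × H)} (hEF : E ⊆ F) (d : D) : edgesD E d ⊆ edgesD F d :=
  fun _ he => ⟨hEF he.1, he.2⟩

theorem edgesD_finite [Finite H] (E : Set (D × H)) (d : D) : (edgesD E d).Finite :=
  (Set.finite_range fun q : H => (d, q)).subset fun e he => ⟨e.2, by rw [← he.2]⟩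

theorem isComponent.mem_iff_reachable (hX : isComponent L X) {r : D ⊕ H} (hr : r ∈ X)
    (w : D ⊕ H) : w ∈ X ↔ (bipartiteGraph L).Reachable r w := by
  obtain ⟨v, -, rfl⟩ := hX
  have hvr : (bipartiteGraph L).Reachable v r := (SimpleGraph.reachable_iff_reflTransGen _ _).2 hr
  change Relation.ReflTransGen (bipartiteGraph L).Adj v w ↔ _
  rw [← SimpleGraph.reachable_iff_reflTransGen]
  exact ⟨hvr.symm.trans, hvr.trans⟩

theorem isComponent.neighborSet_subset (hX : isComponent L X) {w : D ⊕ H} (hw : w ∈ X) :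
    (bipartiteGraph L).neighborSet w ⊆ X := fun u hu =>
  (hX.mem_iff_reachable hw u).2 (SimpleGraph.Adj.reachable hu)

theorem isComponent.fst_mem_Dside (hX : isComponent L X) {e : D × H} (he : e ∈ L)
    (h2 : e.2 ∈ Hside X) : e.1 ∈ Dside X :=
  hX.neighborSet_subset h2 (show adjRel L (Sum.inr e.2) (Sum.inl e.1) from he)

theorem ncard_neighborSet_inl (L : Set (D × H)) (d : D) :
    ((bipartiteGraph L).neighborSet (Sum.inl d)).ncard = (edgesD L d).ncard := by
  have hnbr : (bipartiteGraph L).neighborSet (Sum.inl d) = Sum.inr '' {q | (d, q) ∈ L} := by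
    ext (d' | q) <;> simp [SimpleGraph.mem_neighborSet, bipartiteGraph, adjRel]
  have hedges : edgesD L d = (fun q => (d, q)) '' {q | (d, q) ∈ L} := by
    ext ⟨d', q⟩
    simp only [edgesD, Set.mem_ofPred_eq, Set.mem_image, Prod.mk.injEq]
    grind
  rw [hnbr, hedges, Set.ncard_image_of_injective _ Sum.inr_injective,
    Set.ncard_image_of_injective _ (Prod.mk_right_injective d)]

theorem exists_bfsParent_eq_inl {h q : H}
    (hr : (bipartiteGraph L).Reachable (Sum.inr h) (Sum.inr q)) (hne : q ≠ h) :
    ∃ d, (d, q) ∈ L ∧ (bipartiteGraph L).bfsParent (Sum.inr h) (Sum.inr q) = Sum.inl d := by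
  have hadj := (SimpleGraph.bfsParent_spec hr (by simpa using hne)).1
  generalize (bipartiteGraph L).bfsParent (Sum.inr h) (Sum.inr q) = p at hadj ⊢
  rcases p with d | q'
  · exact ⟨d, hadj, rfl⟩
  · exact hadj.elim

def parentMatching (L : Set (D × H)) (X : Set (D ⊕ H)) (h : H) : Set (D × H) :=
  {e ∈ L | e.2 ∈ Hside X ∧ e.2 ≠ h ∧
    (bipartiteGraph L).bfsParent (Sum.inr h) (Sum.inr e.2) = Sum.inl e.1}

variable {h : H}

theorem parentMatching_eq_of_snd_eq {e f : D × H} (he : e ∈ parentMatching L X h)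
    (hf : f ∈ parentMatching L X h) (h2 : e.2 = f.2) : e = f := by
  have h1 := he.2.2.2.symm.trans ((congrArg _ (congrArg Sum.inr h2)).trans hf.2.2.2)
  exact Prod.ext (Sum.inl_injective h1) h2

theorem parentMatching_eq_of_fst_eq (hX : isComponent L X) (hXfin : X.Finite)
    (hdeg : ∀ d ∈ Dside X, (edgesD L d).ncard ≤ 2) (hh : h ∈ Hside X) {e f : D × H}
    (he : e ∈ parentMatching L X h) (hf : f ∈ parentMatching L X h) (h1 : e.1 = f.1) :
    e = f := by
  have hreach := hX.mem_iff_reachable hh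
  have hd : e.1 ∈ Dside X := hX.fst_mem_Dside he.1 he.2.1
  have hchild : (Sum.inr e.2 : D ⊕ H) = Sum.inr f.2 :=
    SimpleGraph.eq_of_bfsParent_eq (hXfin.subset (hX.neighborSet_subset hd))
      ((ncard_neighborSet_inl L e.1).trans_le (hdeg _ hd)) Sum.inl_ne_inr
      ((hreach _).1 he.2.1) (by simpa using he.2.2.1) he.2.2.2
      ((hreach _).1 hf.2.1) (by simpa using hf.2.2.1) (h1 ▸ hf.2.2.2)
  exact parentMatching_eq_of_snd_eq he hf (Sum.inr_injective hchild)

theorem image_snd_parentMatching (hX : isComponent L X) (hh : h ∈ Hside X) :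
    Prod.snd '' parentMatching L X h = Hside X \ {h} := by
  ext q
  constructor
  · rintro ⟨e, he, rfl⟩
    exact ⟨he.2.1, he.2.2.1⟩
  · rintro ⟨hq, hne⟩
    obtain ⟨d, hL, hpar⟩ := exists_bfsParent_eq_inl ((hX.mem_iff_reachable hh _).1 hq) hne
    exact ⟨(d, q), ⟨hL, hq, hne, hpar⟩, rfl⟩

theorem image_fst_parentMatching (hX : isComponent L X) (hXfin : X.Finite)
    (hdeg : ∀ d ∈ Dside X, (edgesD L d).ncard ≤ 2) (hlt : (Dside X).ncard < (Hside X).ncard)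
    (hh : h ∈ Hside X) : Prod.fst '' parentMatching L X h = Dside X := by
  have hsub : Prod.fst '' parentMatching L X h ⊆ Dside X := by
    rintro _ ⟨e, he, rfl⟩
    exact hX.fst_mem_Dside he.1 he.2.1
  refine Set.eq_of_subset_of_ncard_le hsub ?_ (hXfin.preimage Sum.inl_injective.injOn)
  calc (Dside X).ncard ≤ (Hside X \ {h}).ncard := by
        rw [Set.ncard_sdiff_singleton_of_mem hh]
        omega
    _ = (parentMatching L X h).ncard := by
        rw [← image_snd_parentMatching hX hh]
        exact Set.InjOn.ncard_image fun e he f hf => parentMatching_eq_of_snd_eq he hf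
    _ = (Prod.fst '' parentMatching L X h).ncard :=
        (Set.InjOn.ncard_image fun e he f hf =>
          parentMatching_eq_of_fst_eq hX hXfin hdeg hh he hf).symm

end Bipartite

theorem memQ_matching_avoiding_hospital_general {D H : Type} [Fintype H]
    (I : SSMC D H) (hdeg : ∀ d : D, (edgesD I.E d).ncard ≤ 2)
    (R : Set (D × H))
    (X : Set (D ⊕ H)) (hX : I.memQ R X) (h : H) (hh : h ∈ Hside X) :
    ∃ ξ : Set (D × H), I.isMatching ξ ∧
      ξ ⊆ {e ∈ I.Lset R | e.1 ∈ Dside X} ∧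
      (∀ e ∈ ξ, e.2 ≠ h) ∧
      (∀ d ∈ Dside X, ∃ e ∈ ξ, e.1 = d) := by
  obtain ⟨⟨hcomp, hcard⟩, hlt⟩ := hX
  have hXfin : X.Finite := Set.finite_of_ncard_pos (by omega)
  have hLE : I.Lset R ⊆ I.E := fun e he => he.1.1.1
  have hdegL : ∀ d ∈ Dside X, (edgesD (I.Lset R) d).ncard ≤ 2 := fun d _ =>
    (Set.ncard_le_ncard (edgesD_mono hLE d) (edgesD_finite I.E d)).trans (hdeg d)
  have hcover := image_fst_parentMatching hcomp hXfin hdegL hlt hh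
  refine ⟨parentMatching (I.Lset R) X h,
    ⟨fun e he => hLE he.1,
      fun e he f hf => parentMatching_eq_of_fst_eq hcomp hXfin hdegL hh he hf,
      fun e he f hf => parentMatching_eq_of_snd_eq he hf⟩,
    fun e he => ⟨he.1, hcomp.fst_mem_Dside he.1 he.2.1⟩, fun e he => he.2.2.1, ?_⟩
  rw [← hcover]
  rintro _ ⟨e, he, rfl⟩
  exact ⟨e, he, rfl⟩

/-- in the bounded-degree setting, for every `X ∈ 𝓠` and every
hospital `h ∈ H_X` there is a matching `ξ ⊆ L(D_X)` leaving `h` unmatched and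
matching every doctor of `D_X`. -/
theorem memQ_matching_avoiding_hospital {D H : Type} [Fintype D] [Fintype H]
    (I : SSMC D H) (hdeg : ∀ d : D, (edgesD I.E d).ncard ≤ 2)
    (R μ : Set (D × H)) (hpre : I.preproc R μ)
    (X : Set (D ⊕ H)) (hX : I.memQ R X) (h : H) (hh : h ∈ Hside X) :
    ∃ ξ : Set (D × H), I.isMatching ξ ∧
      ξ ⊆ {e ∈ I.Lset R | e.1 ∈ Dside X} ∧
      (∀ e ∈ ξ, e.2 ≠ h) ∧
      (∀ d ∈ Dside X, ∃ e ∈ ξ, e.1 = d) :=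
  memQ_matching_avoiding_hospital_general I hdeg R X hX h hh
end

section
/- Let L be the edge set of a finite bipartite graph between a doctor side D and a hospital side H, let N be the inclusion-wise minimal minimizer of ρ_L over subsets of D[L], and let T be a nonempty proper subset of N with |T| ≤ |Γ_L(T)|. Then there exists a doctor d ∈ N \ T such that Γ_L(d) ∩ Γ_L(T) ≠ ∅. -/
/-- `Γ_L(X)`: hospitals joined by an edge of `L` to a doctor of `X`. -/
def nbr {D H : Type} (L : Set (D × H)) (X : Set D) : Set H :=
  {h | ∃ d ∈ X, (d, h) ∈ L}

/-- `ρ_L(X) = |Γ_L(X)| − |X|`. -/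
noncomputable def rhoL {D H : Type} (L : Set (D × H)) (X : Set D) : ℤ :=
  ((nbr L X).ncard : ℤ) - (X.ncard : ℤ)

/-!
If no doctor of `N \ T` shares a hospital with `T`, then `Γ_L(N)` is the disjoint union of
`Γ_L(N \ T)` and `Γ_L(T)`, so `ρ_L(N) = ρ_L(N \ T) + ρ_L(T) ≥ ρ_L(N \ T)` because `|T| ≤ |Γ_L(T)|`.
Hence `N \ T` is also a minimizer, and minimality of `N` forces `N ⊆ N \ T`, impossible as `T` is a
nonempty subset of `N`.
-/

section Neighbourhood

variable {D H : Type} (L : Set (D × H))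

theorem nbr_union (X Y : Set D) : nbr L (X ∪ Y) = nbr L X ∪ nbr L Y := by
  ext h
  simp only [nbr, Set.mem_union, Set.mem_ofPred_eq, or_and_right, exists_or]

theorem disjoint_nbr_of_forall_disjoint_nbr_singleton {X Y : Set D}
    (h : ∀ d ∈ X, Disjoint (nbr L {d}) (nbr L Y)) : Disjoint (nbr L X) (nbr L Y) := by
  rw [Set.disjoint_left]
  rintro e ⟨d, hdX, hde⟩
  exact Set.disjoint_left.1 (h d hdX) ⟨d, rfl, hde⟩

theorem rhoL_union [Finite D] [Finite H] {X Y : Set D} (hXY : Disjoint X Y)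
    (hnbr : Disjoint (nbr L X) (nbr L Y)) : rhoL L (X ∪ Y) = rhoL L X + rhoL L Y := by
  simp only [rhoL, nbr_union, Set.ncard_union_eq hXY, Set.ncard_union_eq hnbr]
  push_cast
  ring

theorem rhoL_nonneg_iff {X : Set D} : 0 ≤ rhoL L X ↔ X.ncard ≤ (nbr L X).ncard := by
  simp [rhoL]

end Neighbourhood

/-- if `N` is the inclusion-wise minimal minimizer of `ρ_L` over
subsets of `D[L]` and `T` is a nonempty proper subset of `N` with
`|T| ≤ |Γ_L(T)|`, then some doctor `d ∈ N \ T` has `Γ_L(d) ∩ Γ_L(T) ≠ ∅`. -/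
theorem minimal_minimizer_neighbor {D H : Type} [Fintype D] [Fintype H]
    (L : Set (D × H)) (N T : Set D)
    (hNsub : N ⊆ {d | ∃ e ∈ L, e.1 = d})
    (hmin : ∀ X ⊆ {d : D | ∃ e ∈ L, e.1 = d}, rhoL L N ≤ rhoL L X)
    (hminimal : ∀ X ⊆ {d : D | ∃ e ∈ L, e.1 = d}, rhoL L X = rhoL L N → N ⊆ X)
    (hT : T.Nonempty) (hTN : T ⊂ N) (hcard : T.ncard ≤ (nbr L T).ncard) :
    ∃ d ∈ N \ T, (nbr L {d} ∩ nbr L T).Nonempty := by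
  by_contra! hnone
  have hdisj : Disjoint (nbr L (N \ T)) (nbr L T) :=
    disjoint_nbr_of_forall_disjoint_nbr_singleton L fun d hd =>
      Set.disjoint_iff_inter_eq_empty.2 (hnone d hd)
  have hsplit : rhoL L N = rhoL L (N \ T) + rhoL L T := by
    rw [← rhoL_union L Set.disjoint_sdiff_left hdisj, Set.sdiff_union_of_subset hTN.subset]
  have hdiff_sub : N \ T ⊆ {d : D | ∃ e ∈ L, e.1 = d} := Set.sdiff_subset.trans hNsub
  have hdiff_min : rhoL L (N \ T) = rhoL L N :=
    le_antisymm (by linarith [(rhoL_nonneg_iff L).2 hcard]) (hmin _ hdiff_sub)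
  obtain ⟨t, ht⟩ := hT
  exact (hminimal _ hdiff_sub hdiff_min (hTN.subset ht)).2 ht
end
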